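/- arXiv:1003.2057 — 4 statements merged into one kernel-verified Lean document; each statement's English description precedes it below -/
import Mathlib

section
/- Let u ∈ C³ near a point x₀ ∈ ℝⁿ with u_i(x₀) = 0 for 1 ≤ i ≤ n−1 and u_n(x₀) = |∇u(x₀)| > 0, and let a_{ij} (1 ≤ i,j ≤ n−1) be the curvature matrix of the level sets of u. Then at x₀, the first derivatives a_{ij,k} = ∂a_{ij}/∂x_k (1 ≤ i,j,k ≤ n−1) satisfy a_{ij,k}(x₀) = −u_n^{−1} u_{ijk} + u_n^{−2}(u_{ij} u_{kn} + u_{ik} u_{jn} + u_{jk} u_{in}); in particular a_{ij,k}(x₀) is fully symmetric in the indices i, j, k, so that a_{ij,k}(x₀) = a_{ik,j}(x₀) (a Codazzi-type formula). -/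
/-!
At an aligned point the tangential derivatives `u_i` (`i < n`) vanish, so every term of `a_{ij}`
carrying two of them (both correction terms of the formula, and `u_{nn} u_i u_j` inside `h_{ij}`)
vanishes to second order and does not contribute to a first derivative. Hence `a_{ij,k}` is
the derivative of `-h_{ij} / (|∇u| u_n²)`, and since `∂_k |∇u| = u_{nk}` there, the product rule
gives the formula. Its right-hand side is symmetric in `i, j, k` because second and third
derivatives commute.
-/

open scoped BigOperators RealInnerProductSpace

/-- The partial derivative `∂u/∂x_i` of `u : ℝᵈ → ℝ`. -/
noncomputable def pdv {d : ℕ} (u : EuclideanSpace ℝ (Fin d) → ℝ) (i : Fin d)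
    (x : EuclideanSpace ℝ (Fin d)) : ℝ :=
  fderiv ℝ u x (EuclideanSpace.single i 1)

/-- The second partial derivative `∂²u/∂x_i∂x_j`. -/
noncomputable def pdv2 {d : ℕ} (u : EuclideanSpace ℝ (Fin d) → ℝ) (i j : Fin d)
    (x : EuclideanSpace ℝ (Fin d)) : ℝ :=
  pdv (fun y => pdv u i y) j x

/-- A point `y` is aligned for `v` if the first `m` partial derivatives vanish and the last
partial derivative is positive (so that `∇v(y)` points in the direction of the last axis). -/
def IsAligned {m : ℕ} (v : EuclideanSpace ℝ (Fin (m + 1)) → ℝ)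
    (y : EuclideanSpace ℝ (Fin (m + 1))) : Prop :=
  (∀ i : Fin m, pdv v i.castSucc y = 0) ∧ 0 < pdv v (Fin.last m) y

/-- At an aligned point the curvature matrix of the level set `{v = v(y)}` with respect to
the normal `∇v` is `a_{ij} = -v_{ij}/v_n`. -/
noncomputable def alignedCurvMatrix {m : ℕ} (v : EuclideanSpace ℝ (Fin (m + 1)) → ℝ)
    (y : EuclideanSpace ℝ (Fin (m + 1))) : Matrix (Fin m) (Fin m) ℝ :=
  Matrix.of fun i j => -(pdv2 v i.castSucc j.castSucc y) / pdv v (Fin.last m) y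

/-- The level sets of `u` are strictly convex w.r.t. the normal `∇u` on `S` : in any rotated
coordinate system aligned at `x`, the curvature matrix of the level set is positive definite. -/
def HasStrictlyConvexLevelSets {m : ℕ} (u : EuclideanSpace ℝ (Fin (m + 1)) → ℝ)
    (S : Set (EuclideanSpace ℝ (Fin (m + 1)))) : Prop :=
  ∀ x ∈ S, ∀ Q : EuclideanSpace ℝ (Fin (m + 1)) ≃ₗᵢ[ℝ] EuclideanSpace ℝ (Fin (m + 1)),
    IsAligned (u ∘ Q) (Q.symm x) → (alignedCurvMatrix (u ∘ Q) (Q.symm x)).PosDef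

/-- `K` is the Gaussian curvature of the level sets of `u` (w.r.t. the normal `∇u`) on `S`:
in any rotated coordinate system aligned at `x`, `K x` is the determinant of the curvature
matrix of the level set of `u` through `x`. -/
def IsGaussCurvatureOfLevelSets {m : ℕ} (u : EuclideanSpace ℝ (Fin (m + 1)) → ℝ)
    (K : EuclideanSpace ℝ (Fin (m + 1)) → ℝ)
    (S : Set (EuclideanSpace ℝ (Fin (m + 1)))) : Prop :=
  ∀ x ∈ S, ∀ Q : EuclideanSpace ℝ (Fin (m + 1)) ≃ₗᵢ[ℝ] EuclideanSpace ℝ (Fin (m + 1)),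
    IsAligned (u ∘ Q) (Q.symm x) → K x = (alignedCurvMatrix (u ∘ Q) (Q.symm x)).det

/-- `u` satisfies the minimal surface equation `div(∇u/√(1+|∇u|²)) = 0` on `S`. -/
def SatisfiesMinimalSurfaceEq {d : ℕ} (u : EuclideanSpace ℝ (Fin d) → ℝ)
    (S : Set (EuclideanSpace ℝ (Fin d))) : Prop :=
  ∀ x ∈ S, ∑ α : Fin d, pdv (fun y => pdv u α y / Real.sqrt (1 + ‖gradient u y‖ ^ 2)) α x = 0

/-- `h_{ij} = u_n² u_{ij} + u_{nn} u_i u_j - u_n u_j u_{in} - u_n u_i u_{jn}`. -/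
noncomputable def hMat {m : ℕ} (u : EuclideanSpace ℝ (Fin (m + 1)) → ℝ) (i j : Fin m)
    (y : EuclideanSpace ℝ (Fin (m + 1))) : ℝ :=
  (pdv u (Fin.last m) y) ^ 2 * pdv2 u i.castSucc j.castSucc y
    + pdv2 u (Fin.last m) (Fin.last m) y * pdv u i.castSucc y * pdv u j.castSucc y
    - pdv u (Fin.last m) y * pdv u j.castSucc y * pdv2 u i.castSucc (Fin.last m) y
    - pdv u (Fin.last m) y * pdv u i.castSucc y * pdv2 u j.castSucc (Fin.last m) y

/-- `W = |∇u| / |u_n|`. -/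
noncomputable def Wfun {m : ℕ} (u : EuclideanSpace ℝ (Fin (m + 1)) → ℝ)
    (y : EuclideanSpace ℝ (Fin (m + 1))) : ℝ :=
  ‖gradient u y‖ / |pdv u (Fin.last m) y|

/-- The curvature matrix `a_{ij}` of the level sets of `u`, defined wherever `u_n ≠ 0`:
`a_{ij} = (|∇u| u_n²)⁻¹ [ -h_{ij} + (u_i u_l h_{jl} + u_j u_l h_{il})/(W(1+W)u_n²)
  - u_i u_j u_k u_l h_{kl}/(W²(1+W)² u_n⁴) ]`. -/
noncomputable def curvMat {m : ℕ} (u : EuclideanSpace ℝ (Fin (m + 1)) → ℝ) (i j : Fin m)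
    (y : EuclideanSpace ℝ (Fin (m + 1))) : ℝ :=
  (‖gradient u y‖ * (pdv u (Fin.last m) y) ^ 2)⁻¹ *
    (-hMat u i j y
      + (∑ l : Fin m, (pdv u i.castSucc y * pdv u l.castSucc y * hMat u j l y
          + pdv u j.castSucc y * pdv u l.castSucc y * hMat u i l y)) /
        (Wfun u y * (1 + Wfun u y) * (pdv u (Fin.last m) y) ^ 2)
      - (∑ k : Fin m, ∑ l : Fin m,
          pdv u i.castSucc y * pdv u j.castSucc y * pdv u k.castSucc y * pdv u l.castSucc y *
            hMat u k l y) /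
        ((Wfun u y) ^ 2 * (1 + Wfun u y) ^ 2 * (pdv u (Fin.last m) y) ^ 4))


section VanishesToSecondOrder

variable {E : Type*} [NormedAddCommGroup E] [NormedSpace ℝ E] {f g : E → ℝ} {x : E}

def VanishesToSecondOrderAt (f : E → ℝ) (x : E) : Prop :=
  f x = 0 ∧ HasFDerivAt f (0 : E →L[ℝ] ℝ) x

lemma vanishesToSecondOrderAt_mul (hf : DifferentiableAt ℝ f x) (hg : DifferentiableAt ℝ g x)
    (hfx : f x = 0) (hgx : g x = 0) : VanishesToSecondOrderAt (fun y => f y * g y) x :=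
  ⟨by simp [hfx], by simpa [hfx, hgx] using hf.hasFDerivAt.fun_mul hg.hasFDerivAt⟩

namespace VanishesToSecondOrderAt

lemma mul (hf : VanishesToSecondOrderAt f x) (hg : DifferentiableAt ℝ g x) :
    VanishesToSecondOrderAt (fun y => f y * g y) x :=
  ⟨by simp [hf.1], by simpa [hf.1] using hf.2.fun_mul hg.hasFDerivAt⟩

lemma add (hf : VanishesToSecondOrderAt f x) (hg : VanishesToSecondOrderAt g x) :
    VanishesToSecondOrderAt (fun y => f y + g y) x :=
  ⟨by simp [hf.1, hg.1], by simpa using hf.2.fun_add hg.2⟩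

lemma sub (hf : VanishesToSecondOrderAt f x) (hg : VanishesToSecondOrderAt g x) :
    VanishesToSecondOrderAt (fun y => f y - g y) x :=
  ⟨by simp [hf.1, hg.1], by simpa using hf.2.fun_sub hg.2⟩

lemma sum {ι : Type*} {s : Finset ι} {F : ι → E → ℝ}
    (hF : ∀ i ∈ s, VanishesToSecondOrderAt (F i) x) :
    VanishesToSecondOrderAt (fun y => ∑ i ∈ s, F i y) x :=
  ⟨Finset.sum_eq_zero fun i hi => (hF i hi).1, by
    simpa using HasFDerivAt.fun_sum fun i hi => (hF i hi).2⟩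

open Topology Asymptotics in
lemma div (hf : VanishesToSecondOrderAt f x) (hg : ContinuousAt g x) (hgx : g x ≠ 0) :
    VanishesToSecondOrderAt (fun y => f y / g y) x := by
  refine ⟨by simp [hf.1], HasFDerivAt.of_isLittleO ?_⟩
  have hf' : f =o[𝓝 x] fun y => ‖y - x‖ := by simpa [hf.1] using hf.2.isLittleO.norm_right
  have hg' : (fun y => (g y)⁻¹) =O[𝓝 x] fun _ => (1 : ℝ) :=
    (hg.inv₀ hgx).tendsto.isBigO_one ℝ
  have h := hf'.mul_isBigO hg'
  simp only [mul_one, isLittleO_norm_right] at h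
  simpa [hf.1, div_eq_mul_inv] using h

lemma hasFDerivAt_add {r : E → ℝ} {g' : E →L[ℝ] ℝ} (hr : VanishesToSecondOrderAt r x)
    (hg : HasFDerivAt g g' x) : HasFDerivAt (fun y => g y + r y) g' x := by
  simpa using hg.fun_add hr.2

end VanishesToSecondOrderAt

end VanishesToSecondOrder

section PartialDerivatives

variable {d : ℕ} {u : EuclideanSpace ℝ (Fin d) → ℝ} {x : EuclideanSpace ℝ (Fin d)}

lemma fderiv_apply_single (α : Fin d) : fderiv ℝ u x (EuclideanSpace.single α 1) = pdv u α x :=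
  rfl

lemma pdv_pdv (α β : Fin d) : pdv (pdv u α) β x = pdv2 u α β x :=
  rfl

lemma contDiffAt_pdv {n : WithTop ℕ∞} (hu : ContDiffAt ℝ (n + 1) u x) (α : Fin d) :
    ContDiffAt ℝ n (pdv u α) x :=
  (hu.fderiv_right le_rfl).clm_apply contDiffAt_const

lemma differentiableAt_pdv (hu : ContDiffAt ℝ 2 u x) (α : Fin d) :
    DifferentiableAt ℝ (pdv u α) x :=
  (contDiffAt_pdv (n := 1) hu α).differentiableAt one_ne_zero

lemma pdv2_comm (hu : ContDiffAt ℝ 2 u x) (α β : Fin d) : pdv2 u α β x = pdv2 u β α x := by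
  have hd : DifferentiableAt ℝ (fderiv ℝ u) x :=
    (hu.fderiv_right (m := 1) (by norm_num)).differentiableAt one_ne_zero
  have h : ∀ γ δ : Fin d, pdv2 u γ δ x =
      fderiv ℝ (fderiv ℝ u) x (EuclideanSpace.single δ 1) (EuclideanSpace.single γ 1) := by
    intro γ δ
    simp [pdv2, pdv, fderiv_clm_apply hd (differentiableAt_const _)]
  rw [h, h, (hu.isSymmSndFDerivAt (by simp [minSmoothness_of_isRCLikeNormedField])).eq]

lemma pdv_pdv2_comm (hu : ContDiffAt ℝ 3 u x) (α β γ : Fin d) :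
    pdv (fun y => pdv2 u α β y) γ x = pdv (fun y => pdv2 u α γ y) β x :=
  pdv2_comm (contDiffAt_pdv (n := 2) hu α) β γ

lemma norm_gradient_eq_sqrt (u : EuclideanSpace ℝ (Fin d) → ℝ) (y : EuclideanSpace ℝ (Fin d)) :
    ‖gradient u y‖ = √(∑ α, pdv u α y ^ 2) := by
  have h : ∀ α, gradient u y α = pdv u α y := fun α => by
    have := InnerProductSpace.toDual_symm_apply (x := EuclideanSpace.single α (1 : ℝ))
      (y := fderiv ℝ u y)
    rw [EuclideanSpace.inner_single_right] at this
    simpa [gradient, pdv] using this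
  simp [EuclideanSpace.norm_eq, h]

end PartialDerivatives

section AlignedPoint

variable {m : ℕ} {u : EuclideanSpace ℝ (Fin (m + 1)) → ℝ} {x₀ : EuclideanSpace ℝ (Fin (m + 1))}

lemma IsAligned.norm_gradient_eq (h : IsAligned u x₀) :
    ‖gradient u x₀‖ = pdv u (Fin.last m) x₀ := by
  simp [norm_gradient_eq_sqrt, Fin.sum_univ_castSucc, h.1, Real.sqrt_sq h.2.le]

lemma IsAligned.hasFDerivAt_norm_gradient (h : IsAligned u x₀) (hu : ContDiffAt ℝ 2 u x₀) :
    HasFDerivAt (fun y => ‖gradient u y‖) (fderiv ℝ (pdv u (Fin.last m)) x₀) x₀ := by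
  obtain ⟨hali, hpos⟩ := h
  have hsum := HasFDerivAt.fun_sum (u := Finset.univ) fun α _ =>
    (differentiableAt_pdv hu α).hasFDerivAt.pow 2
  have hsq : ∑ α, pdv u α x₀ ^ 2 = pdv u (Fin.last m) x₀ ^ 2 := by
    simp [Fin.sum_univ_castSucc, hali]
  rw [funext (norm_gradient_eq_sqrt u)]
  refine (hsum.sqrt (by rw [hsq]; positivity)).congr_fderiv ?_
  rw [hsq, Real.sqrt_sq hpos.le, Fin.sum_univ_castSucc]
  simp only [one_div, mul_inv_rev, hali, Nat.add_one_sub_one, pow_one, nsmul_eq_mul,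
    Nat.cast_ofNat, mul_zero, zero_smul, Finset.sum_const_zero, zero_add, smul_smul]
  have hcancel : (pdv u (Fin.last m) x₀)⁻¹ * 2⁻¹ * (2 * pdv u (Fin.last m) x₀) = 1 := by
    field_simp
  rw [hcancel, one_smul]

lemma IsAligned.Wfun_eq_one (h : IsAligned u x₀) : Wfun u x₀ = 1 := by
  rw [Wfun, h.norm_gradient_eq, abs_of_pos h.2, div_self h.2.ne']

lemma IsAligned.continuousAt_Wfun (h : IsAligned u x₀) (hu : ContDiffAt ℝ 2 u x₀) :
    ContinuousAt (Wfun u) x₀ :=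
  (h.hasFDerivAt_norm_gradient hu).continuousAt.div
    (differentiableAt_pdv hu _).continuousAt.abs (abs_pos.2 h.2.ne').ne'

lemma hMat_eq_of_pdv_castSucc_eq_zero (hali : ∀ i : Fin m, pdv u i.castSucc x₀ = 0)
    (a b : Fin m) :
    hMat u a b x₀ = pdv u (Fin.last m) x₀ ^ 2 * pdv2 u a.castSucc b.castSucc x₀ := by
  simp [hMat, hali]

lemma hasFDerivAt_hMat_of_pdv_castSucc_eq_zero (hu : ContDiffAt ℝ 3 u x₀)
    (hali : ∀ i : Fin m, pdv u i.castSucc x₀ = 0) (a b : Fin m) :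
    HasFDerivAt (hMat u a b)
      (pdv u (Fin.last m) x₀ ^ 2 • fderiv ℝ (pdv2 u a.castSucc b.castSucc) x₀
        + (2 * pdv u (Fin.last m) x₀ * pdv2 u a.castSucc b.castSucc x₀) •
            fderiv ℝ (pdv u (Fin.last m)) x₀
        - (pdv u (Fin.last m) x₀ * pdv2 u a.castSucc (Fin.last m) x₀) •
            fderiv ℝ (pdv u b.castSucc) x₀
        - (pdv u (Fin.last m) x₀ * pdv2 u b.castSucc (Fin.last m) x₀) •
            fderiv ℝ (pdv u a.castSucc) x₀) x₀ := by
  have hu2 : ContDiffAt ℝ 2 u x₀ := hu.of_le (by norm_num)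
  have hP : ∀ α, HasFDerivAt (pdv u α) (fderiv ℝ (pdv u α) x₀) x₀ :=
    fun α => (differentiableAt_pdv hu2 α).hasFDerivAt
  have hQ : ∀ α β, HasFDerivAt (pdv2 u α β) (fderiv ℝ (pdv2 u α β) x₀) x₀ :=
    fun α β => (differentiableAt_pdv (contDiffAt_pdv (n := 2) hu α) β).hasFDerivAt
  have h := (((hP (Fin.last m)).pow 2).fun_mul (hQ a.castSucc b.castSucc)).fun_add
      (((hQ (Fin.last m) (Fin.last m)).fun_mul (hP a.castSucc)).fun_mul (hP b.castSucc))
    |>.fun_sub (((hP (Fin.last m)).fun_mul (hP b.castSucc)).fun_mul (hQ a.castSucc (Fin.last m)))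
    |>.fun_sub (((hP (Fin.last m)).fun_mul (hP a.castSucc)).fun_mul (hQ b.castSucc (Fin.last m)))
  refine h.congr_fderiv (ContinuousLinearMap.ext fun v => ?_)
  simp only [Nat.add_one_sub_one, pow_one, nsmul_eq_mul, Nat.cast_ofNat, hali, mul_zero,
    zero_smul, add_zero, zero_add, sub_apply, add_apply,
    smul_apply, smul_eq_mul]
  ring

noncomputable def curvMatCorrection (u : EuclideanSpace ℝ (Fin (m + 1)) → ℝ) (i j : Fin m)
    (y : EuclideanSpace ℝ (Fin (m + 1))) : ℝ :=
  (∑ l : Fin m, (pdv u i.castSucc y * pdv u l.castSucc y * hMat u j l y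
      + pdv u j.castSucc y * pdv u l.castSucc y * hMat u i l y)) /
    (Wfun u y * (1 + Wfun u y) * (pdv u (Fin.last m) y) ^ 2)
  - (∑ k : Fin m, ∑ l : Fin m,
      pdv u i.castSucc y * pdv u j.castSucc y * pdv u k.castSucc y * pdv u l.castSucc y *
        hMat u k l y) /
    ((Wfun u y) ^ 2 * (1 + Wfun u y) ^ 2 * (pdv u (Fin.last m) y) ^ 4)

lemma curvMat_eq_inv_mul (u : EuclideanSpace ℝ (Fin (m + 1)) → ℝ) (i j : Fin m)
    (y : EuclideanSpace ℝ (Fin (m + 1))) :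
    curvMat u i j y = (‖gradient u y‖ * pdv u (Fin.last m) y ^ 2)⁻¹ *
      (-hMat u i j y + curvMatCorrection u i j y) := by
  rw [curvMat, curvMatCorrection, add_sub_assoc]

lemma IsAligned.vanishesToSecondOrderAt_curvMatCorrection (h : IsAligned u x₀)
    (hu : ContDiffAt ℝ 3 u x₀) (i j : Fin m) :
    VanishesToSecondOrderAt (curvMatCorrection u i j) x₀ := by
  have hu2 : ContDiffAt ℝ 2 u x₀ := hu.of_le (by norm_num)
  have hP := differentiableAt_pdv hu2
  have hH a b := (hasFDerivAt_hMat_of_pdv_castSucc_eq_zero hu h.1 a b).differentiableAt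
  have hsq (a b : Fin m) :
      VanishesToSecondOrderAt (fun y => pdv u a.castSucc y * pdv u b.castSucc y) x₀ :=
    vanishesToSecondOrderAt_mul (hP _) (hP _) (h.1 a) (h.1 b)
  have hW := h.continuousAt_Wfun hu2
  have hun := (hP (Fin.last m)).continuousAt
  have hW₀ := h.Wfun_eq_one
  have hpos := h.2
  refine (VanishesToSecondOrderAt.div ?_ (by fun_prop) ?_).sub
    (VanishesToSecondOrderAt.div ?_ (by fun_prop) ?_)
  · exact .sum fun l _ => ((hsq i l).mul (hH j l)).add ((hsq j l).mul (hH i l))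
  · rw [hW₀]; positivity
  · exact .sum fun k _ => .sum fun l _ => (((hsq i j).mul (hP _)).mul (hP _)).mul (hH k l)
  · rw [hW₀]; positivity

lemma IsAligned.pdv_curvMat (h : IsAligned u x₀) (hu : ContDiffAt ℝ 3 u x₀) (i j k : Fin m) :
    pdv (fun y => curvMat u i j y) k.castSucc x₀ =
      -(pdv u (Fin.last m) x₀)⁻¹ * pdv (fun y => pdv2 u i.castSucc j.castSucc y) k.castSucc x₀
        + ((pdv u (Fin.last m) x₀) ^ 2)⁻¹ *
          (pdv2 u i.castSucc j.castSucc x₀ * pdv2 u k.castSucc (Fin.last m) x₀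
            + pdv2 u i.castSucc k.castSucc x₀ * pdv2 u j.castSucc (Fin.last m) x₀
            + pdv2 u j.castSucc k.castSucc x₀ * pdv2 u i.castSucc (Fin.last m) x₀) := by
  have hu2 : ContDiffAt ℝ 2 u x₀ := hu.of_le (by norm_num)
  have hA := (h.hasFDerivAt_norm_gradient hu2).fun_mul
    ((differentiableAt_pdv hu2 (Fin.last m)).hasFDerivAt.pow 2)
  have hA₀ : ‖gradient u x₀‖ * pdv u (Fin.last m) x₀ ^ 2 ≠ 0 := by
    have hpos := h.2
    rw [h.norm_gradient_eq]; positivity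
  have hB := (h.vanishesToSecondOrderAt_curvMatCorrection hu i j).hasFDerivAt_add
    (hasFDerivAt_hMat_of_pdv_castSucc_eq_zero hu h.1 i j).fun_neg
  have hcurv := ((hasDerivAt_inv hA₀).comp_hasFDerivAt x₀ hA).fun_mul hB
  simp only [Function.comp_def, ← curvMat_eq_inv_mul] at hcurv
  rw [pdv, hcurv.fderiv]
  simp only [h.norm_gradient_eq, hMat_eq_of_pdv_castSucc_eq_zero h.1,
    (h.vanishesToSecondOrderAt_curvMatCorrection hu i j).1, add_zero, Nat.add_one_sub_one, pow_one,
    nsmul_eq_mul, Nat.cast_ofNat, smul_add, neg_smul, smul_neg, neg_neg, smul_eq_mul,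
    add_apply, smul_apply, sub_apply,
    neg_apply, fderiv_apply_single, pdv_pdv,
    pdv2_comm hu2 (Fin.last m) k.castSucc]
  field_simp
  ring

end AlignedPoint

theorem codazzi_formula_curvature_matrix_general
    (m : ℕ) (u : EuclideanSpace ℝ (Fin (m + 1)) → ℝ)
    (x₀ : EuclideanSpace ℝ (Fin (m + 1)))
    (hu : ContDiffAt ℝ 3 u x₀)
    (hali : ∀ i : Fin m, pdv u i.castSucc x₀ = 0)
    (hpos : 0 < pdv u (Fin.last m) x₀) :
    ∀ i j k : Fin m,
      pdv (fun y => curvMat u i j y) k.castSucc x₀ =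
        -(pdv u (Fin.last m) x₀)⁻¹ *
            pdv (fun y => pdv2 u i.castSucc j.castSucc y) k.castSucc x₀
          + ((pdv u (Fin.last m) x₀) ^ 2)⁻¹ *
            (pdv2 u i.castSucc j.castSucc x₀ * pdv2 u k.castSucc (Fin.last m) x₀
              + pdv2 u i.castSucc k.castSucc x₀ * pdv2 u j.castSucc (Fin.last m) x₀
              + pdv2 u j.castSucc k.castSucc x₀ * pdv2 u i.castSucc (Fin.last m) x₀) ∧
      pdv (fun y => curvMat u i j y) k.castSucc x₀ =
        pdv (fun y => curvMat u i k y) j.castSucc x₀ := by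
  have h : IsAligned u x₀ := ⟨hali, hpos⟩
  intro i j k
  refine ⟨h.pdv_curvMat hu i j k, ?_⟩
  rw [h.pdv_curvMat hu, h.pdv_curvMat hu, pdv_pdv2_comm hu,
    pdv2_comm (hu.of_le (by norm_num)) j.castSucc k.castSucc]
  ring

/-- **Codazzi-type formula.** If `u` is `C³` near `x₀` with `u_i(x₀) = 0` for `i < n` and
`u_n(x₀) = |∇u(x₀)| > 0`, then at `x₀` the derivatives `a_{ij,k}` of the curvature matrix of
the level sets satisfy
`a_{ij,k} = -u_n⁻¹ u_{ijk} + u_n⁻² (u_{ij} u_{kn} + u_{ik} u_{jn} + u_{jk} u_{in})`;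
in particular `a_{ij,k}` is fully symmetric in `i, j, k`, so `a_{ij,k} = a_{ik,j}`. -/
theorem codazzi_formula_curvature_matrix
    (m : ℕ) (u : EuclideanSpace ℝ (Fin (m + 1)) → ℝ)
    (x₀ : EuclideanSpace ℝ (Fin (m + 1)))
    (hu : ContDiffAt ℝ 3 u x₀)
    (hali : ∀ i : Fin m, pdv u i.castSucc x₀ = 0)
    (hn : pdv u (Fin.last m) x₀ = ‖gradient u x₀‖)
    (hpos : 0 < pdv u (Fin.last m) x₀) :
    ∀ i j k : Fin m,
      pdv (fun y => curvMat u i j y) k.castSucc x₀ =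
        -(pdv u (Fin.last m) x₀)⁻¹ *
            pdv (fun y => pdv2 u i.castSucc j.castSucc y) k.castSucc x₀
          + ((pdv u (Fin.last m) x₀) ^ 2)⁻¹ *
            (pdv2 u i.castSucc j.castSucc x₀ * pdv2 u k.castSucc (Fin.last m) x₀
              + pdv2 u i.castSucc k.castSucc x₀ * pdv2 u j.castSucc (Fin.last m) x₀
              + pdv2 u j.castSucc k.castSucc x₀ * pdv2 u i.castSucc (Fin.last m) x₀) ∧
      pdv (fun y => curvMat u i j y) k.castSucc x₀ =
        pdv (fun y => curvMat u i k y) j.castSucc x₀ :=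
  codazzi_formula_curvature_matrix_general m u x₀ hu hali hpos
end

section
/- Let I be a nonempty finite index set, let λ ≥ 0 and μ ∈ ℝ, and for each i ∈ I let b_i > 0 and c_i ∈ ℝ. Define the quadratic polynomial Q(X) = −Σ_{i∈I} b_i X_i² − λ (Σ_{i∈I} X_i)² + 4μ Σ_{i∈I} c_i X_i for X = (X_i)_{i∈I} ∈ ℝ^I. Then for all X ∈ ℝ^I, Q(X) ≤ 4μ² Γ, where Γ = Σ_{i∈I} c_i²/b_i − λ (1 + λ Σ_{i∈I} 1/b_i)^{-1} (Σ_{i∈I} c_i/b_i)². -/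
/-!
Since `λ ≥ 0`, the term `-λ S²` (with `S = ∑ Xᵢ`) lies below each of its tangent lines
`λ t² - 2λ t S`. After this replacement the quadratic splits into independent one-variable
concave parabolas `-bᵢ Xᵢ² + pᵢ Xᵢ`, each at most `pᵢ² / (4 bᵢ)`. The bound obtained is a
quadratic in `t`, and the tangent point `t = 2μ (∑ cᵢ/bᵢ) / (1 + λ ∑ 1/bᵢ)` turns it into `4μ²Γ`.
-/

open Finset

section OrderedField

variable {K : Type*} [Field K] [LinearOrder K] [IsStrictOrderedRing K]

theorem neg_mul_sq_add_mul_le_sq_div {b : K} (hb : 0 < b) (p x : K) :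
    -(b * x ^ 2) + p * x ≤ p ^ 2 / (4 * b) := by
  rw [le_div_iff₀ (by positivity)]
  nlinarith [sq_nonneg (2 * b * x - p)]

theorem sum_neg_mul_sq_add_mul_le_sum_sq_div {ι : Type*} (s : Finset ι) {b : ι → K}
    (hb : ∀ i ∈ s, 0 < b i) (p x : ι → K) :
    ∑ i ∈ s, (-(b i * x i ^ 2) + p i * x i) ≤ ∑ i ∈ s, p i ^ 2 / (4 * b i) :=
  sum_le_sum fun i hi => neg_mul_sq_add_mul_le_sq_div (hb i hi) _ _

theorem neg_mul_sq_le_tangent {a : K} (ha : 0 ≤ a) (x t : K) :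
    -(a * x ^ 2) ≤ a * t ^ 2 - 2 * a * t * x := by
  nlinarith [mul_nonneg ha (sq_nonneg (x - t))]

end OrderedField

theorem quadratic_max_lemma_general
    {ι : Type*} [Fintype ι]
    (lam mu : ℝ) (hlam : 0 ≤ lam)
    (b c : ι → ℝ) (hb : ∀ i, 0 < b i)
    (X : ι → ℝ) :
    -(∑ i, b i * X i ^ 2) - lam * (∑ i, X i) ^ 2 + 4 * mu * ∑ i, c i * X i ≤
      4 * mu ^ 2 *
        ((∑ i, c i ^ 2 / b i) -
          lam * (1 + lam * ∑ i, 1 / b i)⁻¹ * (∑ i, c i / b i) ^ 2) := by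
  set A := ∑ i, 1 / b i
  set B := ∑ i, c i / b i
  have hD : 0 < 1 + lam * A :=
    add_pos_of_pos_of_nonneg one_pos
      (mul_nonneg hlam (sum_nonneg fun i _ => (one_div_pos.mpr (hb i)).le))
  set t := 2 * mu * B / (1 + lam * A)
  set p : ι → ℝ := fun i => 4 * mu * c i - 2 * lam * t
  have parabolas := sum_neg_mul_sq_add_mul_le_sum_sq_div univ (fun i _ => hb i) p X
  have tangent := neg_mul_sq_le_tangent hlam (∑ i, X i) t
  have sum_p : ∑ i, p i ^ 2 / (4 * b i)
      = 4 * mu ^ 2 * ∑ i, c i ^ 2 / b i - 4 * mu * lam * t * B + lam ^ 2 * t ^ 2 * A := by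
    simp only [A, B, mul_sum, ← sum_sub_distrib, ← sum_add_distrib]
    refine sum_congr rfl fun i _ => ?_
    field_simp [(hb i).ne']
    ring
  calc _ = ∑ i, (-(b i * X i ^ 2) + p i * X i) - lam * (∑ i, X i) ^ 2
          + 2 * lam * t * ∑ i, X i := by
        simp only [p, sum_add_distrib, sub_mul, sum_sub_distrib, mul_sum, sum_neg_distrib, mul_assoc]
        ring
    _ ≤ ∑ i, p i ^ 2 / (4 * b i) + lam * t ^ 2 := by linarith
    _ = _ := by
        rw [sum_p]
        simp only [t]
        field_simp
        ring

/-- **Elementary calculus lemma.** For a nonempty finite index set, `λ ≥ 0`, `μ ∈ ℝ`,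
`b_i > 0`, `c_i ∈ ℝ`, the quadratic
`Q(X) = -∑ b_i X_i² - λ (∑ X_i)² + 4μ ∑ c_i X_i` satisfies `Q(X) ≤ 4μ²Γ` with
`Γ = ∑ c_i²/b_i - λ (1 + λ ∑ 1/b_i)⁻¹ (∑ c_i/b_i)²`. -/
theorem quadratic_max_lemma
    {ι : Type*} [Fintype ι] [Nonempty ι]
    (lam mu : ℝ) (hlam : 0 ≤ lam)
    (b c : ι → ℝ) (hb : ∀ i, 0 < b i)
    (X : ι → ℝ) :
    -(∑ i, b i * X i ^ 2) - lam * (∑ i, X i) ^ 2 + 4 * mu * ∑ i, c i * X i ≤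
      4 * mu ^ 2 *
        ((∑ i, c i ^ 2 / b i) -
          lam * (1 + lam * ∑ i, 1 / b i)⁻¹ * (∑ i, c i / b i) ^ 2) :=
  quadratic_max_lemma_general lam mu hlam b c hb X
end

section
/- Let n ≥ 3 be an integer and θ ∈ ℝ. For t > 0 and s ≥ 1, define q₁(θ,t) = 2θ − n + 3 + (1−n)t, q₂(θ,t) = −(4/(n−1))θ² + (2 − 8/(n−1))θ + 2 − 4/(n−1) − 2θt, and q₃(θ,t,s) = −(4/(n−1))θ² + (4 − 8/(n−1))θ + 5 − n − 4/(n−1) + (−2θ − n + 3 − 2s)t. If θ = −1/2 or θ ≥ (n−3)/2, then for all t > 0 and all s ≥ 1: q₁(θ,t) + q₂(θ,t) ≤ 0, q₁(θ,t) + (n−1) q₂(θ,t) ≤ 0, and q₃(θ,t,s) ≤ 0. -/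
/-!
After clearing the denominator `n - 1`, each expression is minus a square (or a product of two
factors of the same sign) minus a nonnegative multiple of `t`:
`(n-1)(q₁ + q₂) = -(2θ - (n-3))² - (n-1)(2θ + n - 1) t`,
`q₁ + (n-1) q₂ = -(2θ - (n-3))(2θ + 1) - (n-1)(2θ + 1) t`,
`(n-1) q₃ = -(2θ - (n-3))² - (n-1)(2θ + n - 3 + 2s) t`.
The middle product is nonnegative when `θ` lies outside `(-1/2, (n-3)/2)`.
-/

namespace MinimalGraph

noncomputable def q₁ (n θ t : ℝ) : ℝ := 2 * θ - n + 3 + (1 - n) * t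

noncomputable def q₂ (n θ t : ℝ) : ℝ :=
  -(4 / (n - 1)) * θ ^ 2 + (2 - 8 / (n - 1)) * θ + 2 - 4 / (n - 1) - 2 * θ * t

noncomputable def q₃ (n θ t s : ℝ) : ℝ :=
  -(4 / (n - 1)) * θ ^ 2 + (4 - 8 / (n - 1)) * θ + 5 - n - 4 / (n - 1)
    + (-(2 * θ) - n + 3 - 2 * s) * t

section

variable {n θ t : ℝ}

theorem mul_q₁_add_q₂ (hn : n - 1 ≠ 0) :
    (n - 1) * (q₁ n θ t + q₂ n θ t) =
      -(2 * θ - (n - 3)) ^ 2 - (n - 1) * (2 * θ + n - 1) * t := by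
  unfold q₁ q₂
  field_simp
  ring

theorem q₁_add_mul_q₂ (hn : n - 1 ≠ 0) :
    q₁ n θ t + (n - 1) * q₂ n θ t =
      -((2 * θ - (n - 3)) * (2 * θ + 1)) - (n - 1) * (2 * θ + 1) * t := by
  unfold q₁ q₂
  field_simp
  ring

theorem mul_q₃ (hn : n - 1 ≠ 0) (s : ℝ) :
    (n - 1) * q₃ n θ t s = -(2 * θ - (n - 3)) ^ 2 - (n - 1) * (2 * θ + n - 3 + 2 * s) * t := by
  unfold q₃
  field_simp
  ring

variable (hn : 2 ≤ n) (ht : 0 ≤ t)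
include hn ht

theorem q₁_add_q₂_nonpos (hθ : -(1 / 2) ≤ θ) : q₁ n θ t + q₂ n θ t ≤ 0 := by
  have hn₁ : 0 < n - 1 := by linarith
  refine nonpos_of_mul_nonpos_right ?_ hn₁
  rw [mul_q₁_add_q₂ hn₁.ne']
  have : 0 ≤ (n - 1) * (2 * θ + n - 1) * t := by
    have : 0 ≤ 2 * θ + n - 1 := by linarith
    positivity
  nlinarith [sq_nonneg (2 * θ - (n - 3))]

theorem q₁_add_mul_q₂_nonpos (hθ : θ = -(1 / 2) ∨ (n - 3) / 2 ≤ θ) :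
    q₁ n θ t + (n - 1) * q₂ n θ t ≤ 0 := by
  rw [q₁_add_mul_q₂ (by linarith)]
  rcases hθ with rfl | hθ
  · norm_num
  · have h₁ : 0 ≤ 2 * θ - (n - 3) := by linarith
    have h₂ : 0 ≤ 2 * θ + 1 := by linarith
    have : 0 ≤ (n - 1) * (2 * θ + 1) * t := by
      have : 0 ≤ n - 1 := by linarith
      positivity
    nlinarith [mul_nonneg h₁ h₂]

theorem q₃_nonpos (hθ : -(1 / 2) ≤ θ) {s : ℝ} (hs : 1 ≤ s) : q₃ n θ t s ≤ 0 := by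
  have hn₁ : 0 < n - 1 := by linarith
  refine nonpos_of_mul_nonpos_right ?_ hn₁
  rw [mul_q₃ hn₁.ne']
  have : 0 ≤ (n - 1) * (2 * θ + n - 3 + 2 * s) * t := by
    have : 0 ≤ 2 * θ + n - 3 + 2 * s := by linarith
    positivity
  nlinarith [sq_nonneg (2 * θ - (n - 3))]

end

end MinimalGraph

open MinimalGraph in
/-- **Algebraic inequalities in the minimal-graph curvature estimate.** For `n ≥ 3`,
`θ = -1/2` or `θ ≥ (n-3)/2`, all `t > 0` and `s ≥ 1`:
`q₁(θ,t) + q₂(θ,t) ≤ 0`, `q₁(θ,t) + (n-1) q₂(θ,t) ≤ 0`, and `q₃(θ,t,s) ≤ 0`, where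
`q₁(θ,t) = 2θ - n + 3 + (1-n)t`,
`q₂(θ,t) = -(4/(n-1))θ² + (2 - 8/(n-1))θ + 2 - 4/(n-1) - 2θt`,
`q₃(θ,t,s) = -(4/(n-1))θ² + (4 - 8/(n-1))θ + 5 - n - 4/(n-1) + (-2θ - n + 3 - 2s)t`. -/
theorem minimal_graph_sufficient_inequalities
    (n : ℕ) (hn : 3 ≤ n) (θ : ℝ)
    (hθ : θ = -(1 / 2) ∨ ((n : ℝ) - 3) / 2 ≤ θ) :
    ∀ t : ℝ, 0 < t → ∀ s : ℝ, 1 ≤ s →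
      (2 * θ - (n : ℝ) + 3 + (1 - (n : ℝ)) * t) +
        (-(4 / ((n : ℝ) - 1)) * θ ^ 2 + (2 - 8 / ((n : ℝ) - 1)) * θ + 2 - 4 / ((n : ℝ) - 1)
          - 2 * θ * t) ≤ 0 ∧
      (2 * θ - (n : ℝ) + 3 + (1 - (n : ℝ)) * t) +
        ((n : ℝ) - 1) *
          (-(4 / ((n : ℝ) - 1)) * θ ^ 2 + (2 - 8 / ((n : ℝ) - 1)) * θ + 2 - 4 / ((n : ℝ) - 1)
            - 2 * θ * t) ≤ 0 ∧
      -(4 / ((n : ℝ) - 1)) * θ ^ 2 + (4 - 8 / ((n : ℝ) - 1)) * θ + 5 - (n : ℝ)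
          - 4 / ((n : ℝ) - 1) + (-(2 * θ) - (n : ℝ) + 3 - 2 * s) * t ≤ 0 := by
  intro t ht s hs
  have hn₂ : (2 : ℝ) ≤ n := by exact_mod_cast (by omega : 2 ≤ n)
  have hθ' : -(1 / 2) ≤ θ := by
    rcases hθ with h | h
    · exact h.ge
    · linarith
  exact ⟨q₁_add_q₂_nonpos hn₂ ht.le hθ', q₁_add_mul_q₂_nonpos hn₂ ht.le hθ,
    q₃_nonpos hn₂ ht.le hθ' hs⟩
end

section
/- Let Ω ⊂ ℝⁿ be a convex open set and let f ∈ C²(Ω) with f(x) > 0 for all x ∈ Ω. Then the function (x,t) ↦ t³ f(x) is convex on Ω × (0, +∞) if and only if the function x ↦ f(x)^(−1/2) is concave on Ω. -/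
/-!
Put `h = f^(-1/2)`, so that `t³ f(x) = t³ / h(x)²`. The function `φ(s, t) = t³ / s²` is jointly
convex on `s > 0, t ≥ 0` and decreasing in `s`, so concavity of `h` makes `t³ / h(x)²` convex.
Conversely, the convexity inequality at the points `(x, h x)` and `(y, h y)`, where
`t³ / h(x)² = h(x)`, is the concavity inequality for `h` after taking square roots.
-/

open Set

-- With `u = t S`, `v = T s` this is AM-GM: `u³ + 2 v³ - 3 u v² = (u - v)² (u + 2 v)`.
lemma cube_div_sq_tangent_le {s t S T : ℝ} (hs : 0 < s) (ht : 0 ≤ t) (hS : 0 < S) (hT : 0 ≤ T) :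
    T ^ 3 / S ^ 2 + 3 * T ^ 2 / S ^ 2 * (t - T) - 2 * T ^ 3 / S ^ 3 * (s - S) ≤ t ^ 3 / s ^ 2 := by
  have amgm : 3 * (t * S) * (T * s) ^ 2 ≤ (t * S) ^ 3 + 2 * (T * s) ^ 3 := by
    nlinarith [mul_nonneg (sq_nonneg (t * S - T * s)) (by positivity : 0 ≤ t * S + 2 * (T * s))]
  have tangent : T ^ 3 / S ^ 2 + 3 * T ^ 2 / S ^ 2 * (t - T) - 2 * T ^ 3 / S ^ 3 * (s - S)
      = (3 * T ^ 2 * S * t - 2 * T ^ 3 * s) / S ^ 3 := by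
    field_simp
    ring
  rw [tangent, div_le_div_iff₀ (by positivity) (by positivity)]
  nlinarith

lemma convexOn_cube_div_sq :
    ConvexOn ℝ (Ioi 0 ×ˢ Ici 0) (fun p : ℝ × ℝ => p.2 ^ 3 / p.1 ^ 2) := by
  refine ⟨(convex_Ioi 0).prod (convex_Ici 0), ?_⟩
  rintro ⟨s₁, t₁⟩ ⟨hs₁ : 0 < s₁, ht₁ : 0 ≤ t₁⟩ ⟨s₂, t₂⟩ ⟨hs₂ : 0 < s₂, ht₂ : 0 ≤ t₂⟩ a b ha hb hab
  simp only [Prod.smul_mk, Prod.mk_add_mk, smul_eq_mul]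
  have hS : 0 < a * s₁ + b * s₂ := convex_Ioi (0 : ℝ) hs₁ hs₂ ha hb hab
  have hT : 0 ≤ a * t₁ + b * t₂ := by positivity
  have h₁ := cube_div_sq_tangent_le hs₁ ht₁ hS hT
  have h₂ := cube_div_sq_tangent_le hs₂ ht₂ hS hT
  obtain rfl : b = 1 - a := by linarith
  linear_combination a * h₁ + (1 - a) * h₂

section

variable {E : Type*} [AddCommGroup E] [Module ℝ E] {s : Set E} {h : E → ℝ}

lemma ConcaveOn.convexOn_cube_div_sq (hh : ConcaveOn ℝ s h) (hpos : ∀ x ∈ s, 0 < h x) :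
    ConvexOn ℝ (s ×ˢ Ioi 0) (fun p : E × ℝ => p.2 ^ 3 / h p.1 ^ 2) := by
  refine ⟨hh.1.prod (convex_Ioi 0), ?_⟩
  rintro ⟨x, t₁⟩ ⟨hx, ht₁ : 0 < t₁⟩ ⟨y, t₂⟩ ⟨hy, ht₂ : 0 < t₂⟩ a b ha hb hab
  simp only [Prod.smul_mk, Prod.mk_add_mk, smul_eq_mul]
  have hS : 0 < a * h x + b * h y := convex_Ioi (0 : ℝ) (hpos x hx) (hpos y hy) ha hb hab
  have hconc : a * h x + b * h y ≤ h (a • x + b • y) := hh.2 hx hy ha hb hab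
  have hφ := _root_.convexOn_cube_div_sq.2 (mk_mem_prod (hpos x hx) ht₁.le)
    (mk_mem_prod (hpos y hy) ht₂.le) ha hb hab
  simp only [Prod.smul_mk, Prod.mk_add_mk, smul_eq_mul] at hφ
  calc (a * t₁ + b * t₂) ^ 3 / h (a • x + b • y) ^ 2
      ≤ (a * t₁ + b * t₂) ^ 3 / (a * h x + b * h y) ^ 2 := by gcongr
    _ ≤ a * (t₁ ^ 3 / h x ^ 2) + b * (t₂ ^ 3 / h y ^ 2) := hφ

lemma concaveOn_of_convexOn_cube_div_sq
    (H : ConvexOn ℝ (s ×ˢ Ioi 0) (fun p : E × ℝ => p.2 ^ 3 / h p.1 ^ 2))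
    (hpos : ∀ x ∈ s, 0 < h x) : ConcaveOn ℝ s h := by
  have hs : Convex ℝ s := by
    simpa [fst_image_prod s nonempty_Ioi] using H.1.linear_image (LinearMap.fst ℝ E ℝ)
  refine ⟨hs, fun x hx y hy a b ha hb hab => ?_⟩
  have cube_div_sq_self : ∀ u ∈ s, h u ^ 3 / h u ^ 2 = h u := fun u hu => by
    field_simp [(hpos u hu).ne']
  have key := H.2 (mk_mem_prod hx (hpos x hx)) (mk_mem_prod hy (hpos y hy)) ha hb hab
  simp only [Prod.smul_mk, Prod.mk_add_mk, smul_eq_mul, cube_div_sq_self x hx,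
    cube_div_sq_self y hy] at key
  have hS : 0 < a * h x + b * h y := convex_Ioi (0 : ℝ) (hpos x hx) (hpos y hy) ha hb hab
  have hz := hpos _ (hs hx hy ha hb hab)
  rw [div_le_iff₀ (by positivity), pow_succ', mul_le_mul_iff_right₀ hS] at key
  simpa only [smul_eq_mul] using (pow_le_pow_iff_left₀ hS.le hz.le two_ne_zero).1 key

lemma convexOn_cube_div_sq_iff (hpos : ∀ x ∈ s, 0 < h x) :
    ConvexOn ℝ (s ×ˢ Ioi 0) (fun p : E × ℝ => p.2 ^ 3 / h p.1 ^ 2) ↔ ConcaveOn ℝ s h :=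
  ⟨fun H => concaveOn_of_convexOn_cube_div_sq H hpos, fun hh => hh.convexOn_cube_div_sq hpos⟩

end

theorem cube_convex_iff_inv_sqrt_concave_general
    (n : ℕ) (Ω : Set (EuclideanSpace ℝ (Fin n)))
    (f : EuclideanSpace ℝ (Fin n) → ℝ)
    (hfpos : ∀ x ∈ Ω, 0 < f x) :
    ConvexOn ℝ (Ω ×ˢ Set.Ioi (0 : ℝ))
        (fun p : EuclideanSpace ℝ (Fin n) × ℝ => p.2 ^ 3 * f p.1) ↔
      ConcaveOn ℝ Ω (fun x => f x ^ (-(1 / 2) : ℝ)) := by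
  have hpos : ∀ x ∈ Ω, 0 < f x ^ (-(1 / 2) : ℝ) := fun x hx => Real.rpow_pos_of_pos (hfpos x hx) _
  have hf : EqOn (fun p : EuclideanSpace ℝ (Fin n) × ℝ => p.2 ^ 3 * f p.1)
      (fun p => p.2 ^ 3 / (f p.1 ^ (-(1 / 2) : ℝ)) ^ 2) (Ω ×ˢ Ioi 0) := by
    rintro ⟨x, t⟩ ⟨hx, -⟩
    dsimp only
    rw [← Real.rpow_natCast (f x ^ _) 2, ← Real.rpow_mul (hfpos x hx).le]
    norm_num [Real.rpow_neg_one, div_eq_mul_inv]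
  rw [← convexOn_cube_div_sq_iff hpos]
  exact ⟨fun H => H.congr hf, fun H => H.congr hf.symm⟩

/-- **Convexity criterion.** For a convex open `Ω ⊂ ℝⁿ` and a positive `C²` function `f` on
`Ω`, the function `(x, t) ↦ t³ f(x)` is convex on `Ω × (0, ∞)` if and only if `f^(-1/2)` is
concave on `Ω`. -/
theorem cube_convex_iff_inv_sqrt_concave
    (n : ℕ) (Ω : Set (EuclideanSpace ℝ (Fin n)))
    (hΩconv : Convex ℝ Ω) (hΩopen : IsOpen Ω)
    (f : EuclideanSpace ℝ (Fin n) → ℝ)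
    (hf : ContDiffOn ℝ 2 f Ω) (hfpos : ∀ x ∈ Ω, 0 < f x) :
    ConvexOn ℝ (Ω ×ˢ Set.Ioi (0 : ℝ))
        (fun p : EuclideanSpace ℝ (Fin n) × ℝ => p.2 ^ 3 * f p.1) ↔
      ConcaveOn ℝ Ω (fun x => f x ^ (-(1 / 2) : ℝ)) :=
  cube_convex_iff_inv_sqrt_concave_general n Ω f hfpos
end
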